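/- Let $\mathfrak{g}$ be a $2n$-dimensional unimodular Lie algebra with Hermitian structure $(J,g)$. Then the fundamental form $F$ is balanced ($d^*F=0$) if and only if $\sum_{i=1}^{2n}[Je_i,e_i]=0$ for some (equivalently, any) orthonormal basis $\{e_1,\ldots,e_{2n}\}$ of $\mathfrak{g}$. -/

import Mathlib

/-!
By the Koszul formula, `-2 d*F(X)` is a sum over the orthonormal basis of brackets:
`-2 g([JX, eᵢ], eᵢ) + g(J[X, eᵢ], eᵢ) - g([X, Jeᵢ], eᵢ) + g([Jeᵢ, eᵢ], X)`.
Over an orthonormal basis these sums are traces: the first is `tr ad(JX)`, which vanishes by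
unimodularity, and the middle two are `tr (J ∘ ad X)` and `tr (ad X ∘ J)`, which cancel. Hence
`-2 d*F(X) = g(∑ᵢ [Jeᵢ, eᵢ], X)`, and `g` is nondegenerate.
-/

section Orthonormal

variable {R M ι : Type*} [CommRing R] [AddCommGroup M] [Module R M] [Fintype ι] [DecidableEq ι]
  {g : M →ₗ[R] M →ₗ[R] R} {e : Module.Basis ι R M}

namespace Module.Basis

theorem repr_apply_eq_of_orthonormal
    (honb : ∀ i j, g (e i) (e j) = if i = j then 1 else 0) (v : M) (j : ι) :
    e.repr v j = g v (e j) := by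
  conv_rhs => rw [← e.sum_repr v]
  simp [honb, -Module.Basis.sum_repr]

theorem eq_zero_of_forall_apply_eq_zero_of_orthonormal
    (honb : ∀ i j, g (e i) (e j) = if i = j then 1 else 0) {v : M}
    (hv : ∀ j, g v (e j) = 0) : v = 0 :=
  e.ext_elem fun j => by simp [e.repr_apply_eq_of_orthonormal honb, hv]

end Module.Basis

theorem LinearMap.trace_eq_sum_of_orthonormal
    (honb : ∀ i j, g (e i) (e j) = if i = j then 1 else 0) (A : M →ₗ[R] M) :
    trace R M A = ∑ i, g (A (e i)) (e i) := by
  simp [trace_eq_matrix_trace R e A, Matrix.trace, toMatrix_apply,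
    e.repr_apply_eq_of_orthonormal honb]

theorem apply_right_eq_neg_apply_left_of_compatible {J : M →ₗ[R] M} (hJ2 : ∀ x, J (J x) = -x)
    (hcomp : ∀ x y, g (J x) (J y) = g x y) (x y : M) : g x (J y) = -g (J x) y := by
  have := hcomp (J x) y
  simp only [hJ2, map_neg, LinearMap.neg_apply] at this
  linear_combination -this

end Orthonormal

section Hermitian

variable {R L ι : Type*} [CommRing R] [LieRing L] [LieAlgebra R L]
  {g : L →ₗ[R] L →ₗ[R] R} {J : L →ₗ[R] L} {nab : L → L → L} {F : L → L → R}

theorem two_mul_codifferential_term_eq (hsymm : ∀ x y, g x y = g y x)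
    (hJ2 : ∀ x, J (J x) = -x) (hcomp : ∀ x y, g (J x) (J y) = g x y)
    (hKoszul : ∀ X Y Z : L, 2 * g (nab X Y) Z = g ⁅X, Y⁆ Z - g ⁅Y, Z⁆ X + g ⁅Z, X⁆ Y)
    (hF : ∀ X Y, F X Y = g X (J Y)) (x X : L) :
    2 * (-F (nab x x) X - F x (nab x X)) =
      -(2 * g ⁅J X, x⁆ x) + g (J ⁅X, x⁆) x - g ⁅X, J x⁆ x + g ⁅J x, x⁆ X := by
  have hskew := apply_right_eq_neg_apply_left_of_compatible hJ2 hcomp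
  have hxx : 2 * g (nab x x) (J X) = 2 * g ⁅J X, x⁆ x := by
    have := hKoszul x x (J X)
    rw [lie_self, ← lie_skew x (J X)] at this
    simp only [map_zero, LinearMap.zero_apply, map_neg, LinearMap.neg_apply] at this
    linear_combination this
  have hxX : 2 * g (nab x X) (J x) = g (J ⁅X, x⁆) x - g ⁅X, J x⁆ x + g ⁅J x, x⁆ X := by
    rw [hKoszul, hskew, ← lie_skew X x]
    simp only [map_neg, LinearMap.neg_apply]
  rw [hF, hF, hskew x, hsymm (J x)]
  linear_combination -hxx + hxX

variable [Fintype ι] [DecidableEq ι] {e : Module.Basis ι R L}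

theorem two_mul_sum_codifferential_term_eq
    (hunimod : ∀ X : L, LinearMap.trace R L (LieAlgebra.ad R L X) = 0)
    (hsymm : ∀ x y, g x y = g y x) (hJ2 : ∀ x, J (J x) = -x)
    (hcomp : ∀ x y, g (J x) (J y) = g x y)
    (honb : ∀ i j, g (e i) (e j) = if i = j then 1 else 0)
    (hKoszul : ∀ X Y Z : L, 2 * g (nab X Y) Z = g ⁅X, Y⁆ Z - g ⁅Y, Z⁆ X + g ⁅Z, X⁆ Y)
    (hF : ∀ X Y, F X Y = g X (J Y)) (X : L) :
    2 * ∑ i, (-F (nab (e i) (e i)) X - F (e i) (nab (e i) X)) =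
      g (∑ i, ⁅J (e i), e i⁆) X := by
  have := Module.Free.of_basis e
  have := Module.Finite.of_basis e
  have htr := LinearMap.trace_eq_sum_of_orthonormal honb
  have htrace_ad : ∑ i, g ⁅J X, e i⁆ (e i) = 0 := by
    simpa using (htr (LieAlgebra.ad R L (J X))).symm.trans (hunimod (J X))
  have hcyclic : ∑ i, g (J ⁅X, e i⁆) (e i) = ∑ i, g ⁅X, J (e i)⁆ (e i) := by
    simpa using (htr (J ∘ₗ LieAlgebra.ad R L X)).symm.trans
      ((LinearMap.trace_comp_comm' _ _).trans (htr (LieAlgebra.ad R L X ∘ₗ J)))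
  rw [Finset.mul_sum]
  simp only [two_mul_codifferential_term_eq hsymm hJ2 hcomp hKoszul hF,
    Finset.sum_add_distrib, Finset.sum_sub_distrib, Finset.sum_neg_distrib, map_sum,
    LinearMap.sum_apply, hcyclic]
  rw [← Finset.mul_sum, htrace_ad]
  ring

end Hermitian

theorem balanced_iff_sum_brackets_zero_general {L : Type*} [LieRing L] [LieAlgebra ℝ L]
    (n : ℕ)
    (hunimod : ∀ X : L, LinearMap.trace ℝ L (LieAlgebra.ad ℝ L X) = 0)
    (g : L →ₗ[ℝ] L →ₗ[ℝ] ℝ) (hsymm : ∀ x y, g x y = g y x)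
    (J : L →ₗ[ℝ] L) (hJ2 : ∀ x, J (J x) = -x)
    (hcomp : ∀ x y, g (J x) (J y) = g x y)
    (e : Module.Basis (Fin (2 * n)) ℝ L)
    (honb : ∀ i j, g (e i) (e j) = if i = j then (1 : ℝ) else 0)
    (nab : L → L → L)
    (hKoszul : ∀ X Y Z : L,
      2 * g (nab X Y) Z = g ⁅X, Y⁆ Z - g ⁅Y, Z⁆ X + g ⁅Z, X⁆ Y)
    (F : L → L → ℝ) (hF : ∀ X Y, F X Y = g X (J Y)) :
    (∀ X : L, -∑ i, (-F (nab (e i) (e i)) X - F (e i) (nab (e i) X)) = 0) ↔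
      ∑ i, ⁅J (e i), e i⁆ = 0 := by
  have hcodiff := two_mul_sum_codifferential_term_eq hunimod hsymm hJ2 hcomp honb hKoszul hF
  constructor
  · intro hbal
    refine e.eq_zero_of_forall_apply_eq_zero_of_orthonormal honb fun j => ?_
    rw [← hcodiff (e j)]
    linarith [hbal (e j)]
  · intro hsum X
    have := hcodiff X
    rw [hsum, map_zero, LinearMap.zero_apply] at this
    linarith

/-- On a `2n`-dimensional *unimodular* Lie algebra with Hermitian structure `(J, g)`,
the fundamental form `F` is balanced (`d*F = 0`) if and only if
`∑ᵢ ⁅J eᵢ, eᵢ⁆ = 0` for an orthonormal basis `e₁, …, e_{2n}`. -/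
theorem balanced_iff_sum_brackets_zero {L : Type*} [LieRing L] [LieAlgebra ℝ L]
    [Module.Finite ℝ L] (n : ℕ)
    (hunimod : ∀ X : L, LinearMap.trace ℝ L (LieAlgebra.ad ℝ L X) = 0)
    (g : L →ₗ[ℝ] L →ₗ[ℝ] ℝ) (hsymm : ∀ x y, g x y = g y x)
    (J : L →ₗ[ℝ] L) (hJ2 : ∀ x, J (J x) = -x)
    (hN : ∀ x y : L, ⁅J x, J y⁆ - J ⁅J x, y⁆ - J ⁅x, J y⁆ - ⁅x, y⁆ = 0)
    (hcomp : ∀ x y, g (J x) (J y) = g x y)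
    (e : Module.Basis (Fin (2 * n)) ℝ L)
    (honb : ∀ i j, g (e i) (e j) = if i = j then (1 : ℝ) else 0)
    (nab : L → L → L)
    (hKoszul : ∀ X Y Z : L,
      2 * g (nab X Y) Z = g ⁅X, Y⁆ Z - g ⁅Y, Z⁆ X + g ⁅Z, X⁆ Y)
    (F : L → L → ℝ) (hF : ∀ X Y, F X Y = g X (J Y)) :
    (∀ X : L, -∑ i, (-F (nab (e i) (e i)) X - F (e i) (nab (e i) X)) = 0) ↔
      ∑ i, ⁅J (e i), e i⁆ = 0 :=
  balanced_iff_sum_brackets_zero_general n hunimod g hsymm J hJ2 hcomp e honb nab hKoszul F hF
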